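/- Let p be the {0,1}-valued array of size (2,2,2) with p_{1,1,1}=p_{2,2,1}=p_{1,2,2}=p_{2,1,2}=1 and p_{1,2,1}=p_{2,1,1}=p_{1,1,2}=p_{2,2,2}=0. Then there exists a nonnegative real array x of size (2,2,2) with all 1-marginals equal to 1 and x ≤ p entrywise (namely the array with value 1/2 at each position where p is 1 and 0 elsewhere, and this is the unique such real array), but there exists no nonnegative integer array with these properties. -/

import Mathlib

/-- `p` has ones exactly at (1,1,1),(2,2,1),(1,2,2),(2,1,2) (1-based), i.e. at
triples with even coordinate sum. -/
def vlachBound : Fin 2 → Fin 2 → Fin 2 → ℕ :=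
  fun i j k => if (i.1 + j.1 + k.1) % 2 = 0 then 1 else 0

/-!
Write `a, b, c, d` for the entries of an array `x` supported on the even cells
`000, 011, 101, 110` (0-based). The six 1-marginal equations read
`a + b = c + d = a + c = b + d = a + d = b + c = m`, and cancelling pairwise gives
`a = b = c = d`, hence `2a = m`. For `m = 1` this forces every supported entry to
be `1/2` over `ℝ`, and is impossible over `ℕ` by parity.
-/

def HasMarginalsEq {ι M : Type*} [Fintype ι] [AddCommMonoid M] (x : ι → ι → ι → M) (m : M) :
    Prop :=
  (∀ i, ∑ j, ∑ k, x i j k = m) ∧ (∀ j, ∑ i, ∑ k, x i j k = m) ∧ (∀ k, ∑ i, ∑ j, x i j k = m)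

theorem vlachBound_eq_zero_or_one (i j k : Fin 2) : vlachBound i j k = 0 ∨ vlachBound i j k = 1 := by
  unfold vlachBound
  split_ifs <;> simp

theorem add_self_eq_of_hasMarginalsEq {M : Type*} [AddCancelCommMonoid M]
    {x : Fin 2 → Fin 2 → Fin 2 → M} {m : M}
    (hsupp : ∀ i j k, vlachBound i j k = 0 → x i j k = 0) (hx : HasMarginalsEq x m)
    {i j k : Fin 2} (hijk : vlachBound i j k = 1) : x i j k + x i j k = m := by
  obtain ⟨h1, h2, h3⟩ := hx
  have z001 : x 0 0 1 = 0 := hsupp _ _ _ rfl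
  have z010 : x 0 1 0 = 0 := hsupp _ _ _ rfl
  have z100 : x 1 0 0 = 0 := hsupp _ _ _ rfl
  have z111 : x 1 1 1 = 0 := hsupp _ _ _ rfl
  have hab : x 0 0 0 + x 0 1 1 = m := by simpa [Fin.sum_univ_two, z001, z010] using h1 0
  have hcd : x 1 0 1 + x 1 1 0 = m := by simpa [Fin.sum_univ_two, z100, z111] using h1 1
  have hac : x 0 0 0 + x 1 0 1 = m := by simpa [Fin.sum_univ_two, z001, z100] using h2 0
  have hbc : x 0 1 1 + x 1 0 1 = m := by simpa [Fin.sum_univ_two, z001, z111] using h3 1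
  have hc : x 1 0 1 = x 0 0 0 := add_left_cancel (hbc.trans ((add_comm _ _).trans hab).symm)
  have hb : x 0 1 1 = x 0 0 0 := (add_left_cancel (hab.trans hac.symm)).trans hc
  have hd : x 1 1 0 = x 0 0 0 := add_left_cancel (hcd.trans ((add_comm _ _).trans hac).symm)
  have ha : x 0 0 0 + x 0 0 0 = m := hc ▸ hac
  fin_cases i <;> fin_cases j <;> fin_cases k <;>
    first
    | exact absurd hijk (by decide)
    | simpa only [Fin.zero_eta, Fin.mk_one, hb, hc, hd] using ha

theorem hasMarginalsEq_vlachBound_half :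
    HasMarginalsEq (fun i j k => (vlachBound i j k : ℝ) / 2) 1 := by
  refine ⟨fun a => ?_, fun a => ?_, fun a => ?_⟩ <;> fin_cases a <;>
    norm_num [Fin.sum_univ_two, vlachBound]

theorem vlachBound_half_eq_ite :
    (fun i j k => (vlachBound i j k : ℝ) / 2) =
      fun i j k : Fin 2 => if (i.1 + j.1 + k.1) % 2 = 0 then (1 : ℝ) / 2 else 0 := by
  funext i j k
  unfold vlachBound
  split_ifs <;> norm_num

theorem eq_vlachBound_half_of_hasMarginalsEq {x : Fin 2 → Fin 2 → Fin 2 → ℝ}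
    (hx0 : ∀ i j k, 0 ≤ x i j k) (hle : ∀ i j k, x i j k ≤ vlachBound i j k)
    (hx : HasMarginalsEq x 1) : x = fun i j k => (vlachBound i j k : ℝ) / 2 := by
  have hsupp : ∀ i j k, vlachBound i j k = 0 → x i j k = 0 := fun i j k h =>
    le_antisymm (by simpa [h] using hle i j k) (hx0 i j k)
  funext i j k
  rcases vlachBound_eq_zero_or_one i j k with h | h
  · simp [h, hsupp i j k h]
  · have := add_self_eq_of_hasMarginalsEq hsupp hx h
    rw [h]
    linarith

theorem not_exists_nat_le_vlachBound_hasMarginalsEq_one :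
    ¬ ∃ z : Fin 2 → Fin 2 → Fin 2 → ℕ, (∀ i j k, z i j k ≤ vlachBound i j k) ∧ HasMarginalsEq z 1 := by
  rintro ⟨z, hle, hz⟩
  have hsupp : ∀ i j k, vlachBound i j k = 0 → z i j k = 0 := fun i j k h =>
    Nat.le_zero.mp (h ▸ hle i j k)
  have := add_self_eq_of_hasMarginalsEq hsupp hz (i := 0) (j := 0) (k := 0) rfl
  omega

theorem real_feasible_integer_infeasible :
    (∃! x : Fin 2 → Fin 2 → Fin 2 → ℝ,
      (∀ i j k, 0 ≤ x i j k) ∧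
      (∀ i j k, x i j k ≤ (vlachBound i j k : ℝ)) ∧
      (∀ i, ∑ j, ∑ k, x i j k = 1) ∧
      (∀ j, ∑ i, ∑ k, x i j k = 1) ∧
      (∀ k, ∑ i, ∑ j, x i j k = 1)) ∧
    ((fun i j k => (vlachBound i j k : ℝ) / 2) =
      fun i j k : Fin 2 => if (i.1 + j.1 + k.1) % 2 = 0 then (1 : ℝ) / 2 else 0) ∧
    ((∀ i j k, (0:ℝ) ≤ (vlachBound i j k : ℝ) / 2) ∧
      (∀ i j k, (vlachBound i j k : ℝ) / 2 ≤ (vlachBound i j k : ℝ)) ∧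
      (∀ i, ∑ j, ∑ k, (vlachBound i j k : ℝ) / 2 = 1) ∧
      (∀ j, ∑ i, ∑ k, (vlachBound i j k : ℝ) / 2 = 1) ∧
      (∀ k, ∑ i, ∑ j, (vlachBound i j k : ℝ) / 2 = 1)) ∧
    ¬ (∃ z : Fin 2 → Fin 2 → Fin 2 → ℕ,
      (∀ i j k, z i j k ≤ vlachBound i j k) ∧
      (∀ i, ∑ j, ∑ k, z i j k = 1) ∧
      (∀ j, ∑ i, ∑ k, z i j k = 1) ∧
      (∀ k, ∑ i, ∑ j, z i j k = 1)) := by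
  have hhalf_nonneg : ∀ i j k, (0 : ℝ) ≤ (vlachBound i j k : ℝ) / 2 := fun _ _ _ => by positivity
  have hhalf_le : ∀ i j k, (vlachBound i j k : ℝ) / 2 ≤ vlachBound i j k := fun _ _ _ =>
    half_le_self (Nat.cast_nonneg _)
  have hhalf := hasMarginalsEq_vlachBound_half
  refine ⟨⟨_, ⟨hhalf_nonneg, hhalf_le, hhalf⟩, ?_⟩, vlachBound_half_eq_ite,
    ⟨hhalf_nonneg, hhalf_le, hhalf⟩, not_exists_nat_le_vlachBound_hasMarginalsEq_one⟩
  rintro y ⟨hy0, hyle, hy⟩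
  exact eq_vlachBound_half_of_hasMarginalsEq hy0 hyle hy
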